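/- For every η ∈ (1/2, 1] and n̄ > 0, L(η, n̄) ≤ U(η, n̄), i.e., g(η n̄) − g((1−η) n̄) ≤ g((2η−1) n̄). -/

import Mathlib

noncomputable def g (x : ℝ) : ℝ := (1 + x) * Real.log (1 + x) - x * Real.log x

/-!
`g` is concave on `[0, ∞)` with `g 0 = 0` (its derivative `log (1 + 1/x)` decreases), hence
subadditive there. Splitting `η n̄ = (1 - η) n̄ + (2η - 1) n̄` into two nonnegative parts gives
`g (η n̄) ≤ g ((1 - η) n̄) + g ((2η - 1) n̄)`.
-/

open Real Set

theorem ConcaveOn.mul_le_map_mul_of_nonneg {f : ℝ → ℝ} (hf : ConcaveOn ℝ (Ici 0) f)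
    (h₀ : 0 ≤ f 0) {x t : ℝ} (hx : 0 ≤ x) (ht₀ : 0 ≤ t) (ht₁ : t ≤ 1) :
    t * f x ≤ f (t * x) := by
  have h := hf.2 (mem_Ici.2 hx) (mem_Ici.2 le_rfl) ht₀ (sub_nonneg.2 ht₁) (add_sub_cancel t 1)
  simp only [smul_eq_mul, mul_zero, add_zero] at h
  linarith [mul_nonneg (sub_nonneg.2 ht₁) h₀]

theorem ConcaveOn.map_add_le_of_nonneg {f : ℝ → ℝ} (hf : ConcaveOn ℝ (Ici 0) f)
    (h₀ : 0 ≤ f 0) {x y : ℝ} (hx : 0 ≤ x) (hy : 0 ≤ y) :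
    f (x + y) ≤ f x + f y := by
  rcases (add_nonneg hx hy).eq_or_lt with hxy | hxy
  · obtain ⟨rfl, rfl⟩ : x = 0 ∧ y = 0 := ⟨by linarith, by linarith⟩
    simpa using h₀
  have share {z : ℝ} (hz : 0 ≤ z) (hzle : z ≤ x + y) : z / (x + y) * f (x + y) ≤ f z := by
    simpa [div_mul_cancel₀ z hxy.ne'] using
      hf.mul_le_map_mul_of_nonneg h₀ hxy.le (div_nonneg hz hxy.le) ((div_le_one hxy).2 hzle)
  calc f (x + y) = x / (x + y) * f (x + y) + y / (x + y) * f (x + y) := by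
        field_simp
    _ ≤ f x + f y := add_le_add (share hx (by linarith)) (share hy (by linarith))

theorem continuous_g : Continuous g :=
  (continuous_mul_log.comp (continuous_const.add continuous_id)).sub continuous_mul_log

theorem hasDerivAt_g {x : ℝ} (hx : 0 < x) : HasDerivAt g (log (1 + x⁻¹)) x := by
  have h₁ : HasDerivAt (fun y ↦ (1 + y) * log (1 + y)) (log (1 + x) + 1) x :=
    (hasDerivAt_mul_log (by positivity)).comp_const_add 1 x
  refine (h₁.sub (hasDerivAt_mul_log hx.ne')).congr_deriv ?_
  rw [add_sub_add_right_eq_sub, ← log_div (by positivity) hx.ne', add_div, div_self hx.ne',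
    one_div, add_comm]

theorem concaveOn_g : ConcaveOn ℝ (Ici 0) g := by
  refine AntitoneOn.concaveOn_of_deriv (convex_Ici 0) continuous_g.continuousOn ?_ ?_ <;>
    rw [interior_Ici]
  · exact fun x hx ↦ (hasDerivAt_g hx).differentiableAt.differentiableWithinAt
  · intro x (hx : 0 < x) y (hy : 0 < y) hxy
    rw [(hasDerivAt_g hx).deriv, (hasDerivAt_g hy).deriv]
    gcongr

theorem lower_le_upper (η nbar : ℝ) (hη : η ∈ Set.Ioc (1 / 2 : ℝ) 1) (hn : 0 < nbar) :
    g (η * nbar) - g ((1 - η) * nbar) ≤ g ((2 * η - 1) * nbar) := by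
  obtain ⟨hη₁, hη₂⟩ := hη
  have h := concaveOn_g.map_add_le_of_nonneg (by simp [g])
    (mul_nonneg (sub_nonneg.2 hη₂) hn.le) (mul_nonneg (by linarith : 0 ≤ 2 * η - 1) hn.le)
  rw [← add_mul, show 1 - η + (2 * η - 1) = η by ring] at h
  linarith
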